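/- Define χ : ℝ → ℝ by χ(s) := min{ −s·v²·sin(ln(1 + |s·v|)) : v ∈ ℝ, 1/2 ≤ |v| ≤ 1 } (the minimum exists since the constraint set is compact and the expression is continuous in v). For every integer k ≥ 1 set s_k := (1/2)·e^{kπ}·(e^π − 1). Then χ(−s_{2k}) > (1/4)·s_{2k}·sin(π − ln 2) and χ(s_{2k+1}) > (1/4)·s_{2k+1}·sin(π − ln 2) for every k ≥ 1; consequently sup_{s>0} χ(s) = ∞ and sup_{s<0} χ(s) = ∞. In particular, the scalar function f : ℝ → ℝ, u ↦ u·sin(ln(1 + |u|)) (viewed as a function with trivial dependence on its first two arguments) has both the negative-definite and the positive-definite high-gain properties with v* = 1/2. -/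
import Mathlib


open Real

noncomputable section

/-- The function `χ` associated (with `v* = 1/2`) with the scalar nonlinearity
`f(u) = u·sin(ln(1+|u|))`:
`χ(s) = min { v·f(−s·v) : 1/2 ≤ |v| ≤ 1 } = min { −s·v²·sin(ln(1+|s·v|)) : 1/2 ≤ |v| ≤ 1 }`. -/
def chiSin (s : ℝ) : ℝ :=
  sInf {x : ℝ | ∃ v : ℝ, 1 / 2 ≤ |v| ∧ |v| ≤ 1 ∧
    x = -s * v ^ 2 * Real.sin (Real.log (1 + |s * v|))}

/-- `s_k = (1/2)·e^{kπ}·(e^π − 1)`. -/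
def sSeq (k : ℕ) : ℝ := (1 / 2) * Real.exp (k * π) * (Real.exp π - 1)

lemma expPi_gt : (17:ℝ) < Real.exp π := by
  have h3 : (3:ℝ) < π := by linarith [Real.pi_gt_d6]
  have : Real.exp 3 < Real.exp π := Real.exp_lt_exp.2 h3
  have h1 : (2.7182818283:ℝ) < Real.exp 1 := Real.exp_one_gt_d9
  have he3 : Real.exp 3 = Real.exp 1 ^ 3 := by
    rw [show (3:ℝ) = (3:ℕ) * 1 by norm_num, Real.exp_nat_mul]
  have h17 : (17:ℝ) < 2.7182818283 ^ 3 := by norm_num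
  have := pow_lt_pow_left₀ h1 (by norm_num : (0:ℝ) ≤ 2.7182818283) (by norm_num : 3 ≠ 0)
  linarith

lemma expPi_lt : Real.exp π < 64 := by
  have h4 : π < 4 := by linarith [Real.pi_lt_d2]
  have : Real.exp π < Real.exp 4 := Real.exp_lt_exp.2 h4
  have h1 : Real.exp 1 < 2.7182818286 := Real.exp_one_lt_d9
  have he4 : Real.exp 4 = Real.exp 1 ^ 4 := by
    rw [show (4:ℝ) = (4:ℕ) * 1 by norm_num, Real.exp_nat_mul]
  have h64 : (2.7182818286:ℝ) ^ 4 < 64 := by norm_num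
  have := pow_lt_pow_left₀ h1 (Real.exp_pos 1).le (by norm_num : 4 ≠ 0)
  linarith

lemma expn_ge (n : ℕ) (hn : 1 ≤ n) : Real.exp π ≤ Real.exp (n * π) := by
  apply Real.exp_le_exp.2
  have : (1:ℝ) ≤ (n:ℝ) := by exact_mod_cast hn
  nlinarith [Real.pi_pos]

lemma sSeq_pos (n : ℕ) : 0 < sSeq n := by
  have := expPi_gt
  have := Real.exp_pos ((n:ℝ) * π)
  unfold sSeq; nlinarith

lemma log2_lt : Real.log 2 < 0.6931471808 := Real.log_two_lt_d9
lemma log2_gt : (0.6931471803:ℝ) < Real.log 2 := Real.log_two_gt_d9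

lemma log83_lt_pi2 : Real.log (8/3) < π / 2 := by
  have : Real.log (8/3) < Real.log (Real.exp 1) := by
    apply Real.log_lt_log (by norm_num)
    linarith [Real.exp_one_gt_d9]
  rw [Real.log_exp] at this
  linarith [Real.pi_gt_d6]

lemma log2_lt_log83 : Real.log 2 < Real.log (8/3) := Real.log_lt_log (by norm_num) (by norm_num)

-- sin a ≤ sin y for a ≤ y ≤ π − a, 0 ≤ a ≤ π/2
lemma sin_ge_aux {a y : ℝ} (ha0 : 0 ≤ a) (ha : a ≤ π/2) (h1 : a ≤ y) (h2 : y ≤ π - a) :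
    Real.sin a ≤ Real.sin y := by
  have hpi := Real.pi_pos
  rcases le_or_gt y (π/2) with h | h
  · exact Real.strictMonoOn_sin.monotoneOn ⟨by linarith, ha⟩ ⟨by linarith, h⟩ h1
  · rw [← Real.sin_pi_sub y]
    exact Real.strictMonoOn_sin.monotoneOn ⟨by linarith, ha⟩ ⟨by linarith, by linarith⟩
      (by linarith)

-- key interval bound
lemma log_bounds (n : ℕ) (hn : 1 ≤ n) {t : ℝ} (ht1 : 1/2 ≤ t) (ht2 : t ≤ 1) :
    (n:ℝ) * π + Real.log 4 ≤ Real.log (1 + sSeq n * t) ∧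
    Real.log (1 + sSeq n * t) ≤ (n:ℝ) * π + (π - Real.log 2) ∧
    (t ≤ 3/4 → Real.log (1 + sSeq n * t) ≤ (n:ℝ) * π + (π - Real.log (8/3))) := by
  have hE := expn_ge n hn
  have hP := expPi_gt
  have hEpos := Real.exp_pos ((n:ℝ) * π)
  have hs := sSeq_pos n
  have hpos : (0:ℝ) < 1 + sSeq n * t := by nlinarith
  set E := Real.exp ((n:ℝ) * π) with hEdef
  have hsval : sSeq n = (1/2) * E * (Real.exp π - 1) := rfl
  refine ⟨?_, ?_, ?_⟩
  · rw [Real.le_log_iff_exp_le hpos, Real.exp_add, Real.exp_log (by norm_num : (0:ℝ) < 4)]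
    nlinarith
  · rw [Real.log_le_iff_le_exp hpos]
    have : Real.exp ((n:ℝ) * π + (π - Real.log 2)) = E * Real.exp π / 2 := by
      rw [show (n:ℝ) * π + (π - Real.log 2) = ((n:ℝ) * π + π) + (- Real.log 2) by ring,
        Real.exp_add, Real.exp_add, Real.exp_neg, Real.exp_log (by norm_num : (0:ℝ) < 2)]
      ring
    rw [this]
    nlinarith
  · intro ht3
    rw [Real.log_le_iff_le_exp hpos]
    have : Real.exp ((n:ℝ) * π + (π - Real.log (8/3))) = E * Real.exp π * (3/8) := by
      rw [show (n:ℝ) * π + (π - Real.log (8/3)) = ((n:ℝ) * π + π) + (- Real.log (8/3)) by ring,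
        Real.exp_add, Real.exp_add, Real.exp_neg, Real.exp_log (by norm_num : (0:ℝ) < 8/3)]
      ring
    rw [this]
    nlinarith

def cBound (n : ℕ) : ℝ :=
  min ((1/4) * sSeq n * Real.sin (Real.log (8/3))) ((9/16) * sSeq n * Real.sin (Real.log 2))

lemma sin_log2_pos : 0 < Real.sin (Real.log 2) := by
  apply Real.sin_pos_of_pos_of_lt_pi (by linarith [log2_gt])
  linarith [log2_lt, Real.pi_gt_d6]

lemma cBound_gt (n : ℕ) : (1/4) * sSeq n * Real.sin (π - Real.log 2) < cBound n := by
  rw [Real.sin_pi_sub]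
  have hs := sSeq_pos n
  have hsin2 := sin_log2_pos
  have hmono : Real.sin (Real.log 2) < Real.sin (Real.log (8/3)) := by
    apply Real.strictMonoOn_sin ⟨by linarith [log2_gt, Real.pi_pos], by linarith [log2_lt, Real.pi_gt_d6, log2_lt_log83, log83_lt_pi2]⟩
      ⟨by linarith [log2_gt, log2_lt_log83, Real.pi_pos], le_of_lt log83_lt_pi2⟩ log2_lt_log83
  apply lt_min
  · nlinarith
  · nlinarith

lemma key (n : ℕ) (hn : 1 ≤ n) (v : ℝ) (h1 : 1/2 ≤ |v|) (h2 : |v| ≤ 1) :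
    cBound n ≤ sSeq n * v^2 * ((-1:ℝ)^n * Real.sin (Real.log (1 + sSeq n * |v|))) := by
  obtain ⟨hlo, hhi, hhi3⟩ := log_bounds n hn h1 h2
  set x := Real.log (1 + sSeq n * |v|) with hx
  have hs := sSeq_pos n
  have hsin_shift : (-1:ℝ)^n * Real.sin x = Real.sin (x - n * π) := by
    have := Real.sin_add_nat_mul_pi (x - n * π) n
    rw [sub_add_cancel] at this
    have h2n : ((-1:ℝ)^n) * ((-1:ℝ)^n) = 1 := by
      rw [← pow_add]
      exact (neg_one_pow_eq_one_iff_even (by norm_num)).2 ⟨n, by ring⟩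
    rw [this, ← mul_assoc, h2n, one_mul]
  rw [hsin_shift]
  set y := x - n * π with hy
  have hy1 : Real.log 4 ≤ y := by simp only [hy]; linarith
  have hy2 : y ≤ π - Real.log 2 := by simp only [hy]; linarith
  have hlog4 : Real.log 4 = 2 * Real.log 2 := by
    rw [show (4:ℝ) = 2^2 by norm_num, Real.log_pow]; push_cast; ring
  have hl2g := log2_gt
  have hl2l := log2_lt
  have hpi := Real.pi_gt_d6
  have h83_le_4 : Real.log (8/3) ≤ Real.log 4 := Real.log_le_log (by norm_num) (by norm_num)
  have hv2 : 1/4 ≤ v^2 := by nlinarith [sq_abs v]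
  rcases le_or_gt (|v|) (3/4) with h34 | h34
  · have hy3 : y ≤ π - Real.log (8/3) := by simp only [hy]; linarith [hhi3 h34]
    have hsiny : Real.sin (Real.log (8/3)) ≤ Real.sin y :=
      sin_ge_aux (Real.log_nonneg (by norm_num)) (le_of_lt log83_lt_pi2)
        (le_trans h83_le_4 hy1) hy3
    have hsinpos : 0 < Real.sin (Real.log (8/3)) := by
      linarith [sin_log2_pos, Real.strictMonoOn_sin.monotoneOn
        (Set.mem_Icc.2 ⟨by linarith [Real.pi_pos], by linarith⟩)
        (Set.mem_Icc.2 ⟨by linarith [Real.pi_pos, log2_lt_log83], le_of_lt log83_lt_pi2⟩)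
        (le_of_lt log2_lt_log83)]
    calc cBound n ≤ (1/4) * sSeq n * Real.sin (Real.log (8/3)) := min_le_left _ _
      _ = sSeq n * ((1/4) * Real.sin (Real.log (8/3))) := by ring
      _ ≤ sSeq n * (v^2 * Real.sin y) := by
          apply mul_le_mul_of_nonneg_left _ hs.le
          exact mul_le_mul hv2 hsiny hsinpos.le (by positivity)
      _ = sSeq n * v^2 * Real.sin y := by ring
  · have hv2' : 9/16 ≤ v^2 := by nlinarith [sq_abs v]
    have hsiny : Real.sin (Real.log 2) ≤ Real.sin y :=
      sin_ge_aux (by linarith) (by linarith) (by linarith) hy2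
    have := sin_log2_pos
    calc cBound n ≤ (9/16) * sSeq n * Real.sin (Real.log 2) := min_le_right _ _
      _ = sSeq n * ((9/16) * Real.sin (Real.log 2)) := by ring
      _ ≤ sSeq n * (v^2 * Real.sin y) := by
          apply mul_le_mul_of_nonneg_left _ hs.le
          exact mul_le_mul hv2' hsiny sin_log2_pos.le (by positivity)
      _ = sSeq n * v^2 * Real.sin y := by ring


lemma chi_even (k : ℕ) (hk : 1 ≤ k) : cBound (2*k) ≤ chiSin (-(sSeq (2*k))) := by
  apply le_csInf
  · exact ⟨_, 1, by norm_num, by norm_num, rfl⟩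
  · rintro x ⟨v, hv1, hv2, rfl⟩
    have hs := sSeq_pos (2*k)
    have habs : |(-(sSeq (2*k))) * v| = sSeq (2*k) * |v| := by
      rw [abs_mul, abs_neg, abs_of_pos hs]
    have hkey := key (2*k) (by omega) v hv1 hv2
    have hpow : ((-1:ℝ))^(2*k) = 1 := by
      rw [pow_mul]; norm_num
    rw [hpow, one_mul] at hkey
    rw [habs, neg_neg]
    linarith [hkey]

lemma chi_odd (k : ℕ) : cBound (2*k+1) ≤ chiSin (sSeq (2*k+1)) := by
  apply le_csInf
  · exact ⟨_, 1, by norm_num, by norm_num, rfl⟩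
  · rintro x ⟨v, hv1, hv2, rfl⟩
    have hs := sSeq_pos (2*k+1)
    have habs : |(sSeq (2*k+1)) * v| = sSeq (2*k+1) * |v| := by
      rw [abs_mul, abs_of_pos hs]
    have hkey := key (2*k+1) (by omega) v hv1 hv2
    have hpow : ((-1:ℝ))^(2*k+1) = -1 := Odd.neg_one_pow ⟨k, by ring⟩
    rw [hpow] at hkey
    rw [habs]
    calc cBound (2*k+1)
        ≤ sSeq (2*k+1) * v^2 * (-1 * Real.sin (Real.log (1 + sSeq (2*k+1) * |v|))) := hkey
      _ = -sSeq (2*k+1) * v^2 * Real.sin (Real.log (1 + sSeq (2*k+1) * |v|)) := by ring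

lemma sin_log2_gt_half : 1/2 < Real.sin (Real.log 2) := by
  have h64 : π < Real.log 64 := by
    rw [Real.lt_log_iff_exp_lt (by norm_num : (0:ℝ) < 64)]
    exact expPi_lt
  have hl64 : Real.log 64 = 6 * Real.log 2 := by
    rw [show (64:ℝ) = 2^6 by norm_num, Real.log_pow]; push_cast; ring
  have h6 : π/6 < Real.log 2 := by rw [hl64] at h64; linarith
  have := Real.strictMonoOn_sin (Set.mem_Icc.2 ⟨by linarith [Real.pi_pos], by linarith [Real.pi_pos]⟩)
    (Set.mem_Icc.2 ⟨by linarith [log2_gt, Real.pi_pos], by linarith [log2_lt, Real.pi_gt_d6]⟩) h6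
  rw [Real.sin_pi_div_six] at this
  exact this

lemma sSeq_ge (m : ℕ) : (m:ℝ) ≤ sSeq m := by
  have h := Real.add_one_le_exp ((m:ℝ)*π)
  have hP := expPi_gt
  have hpi : (3:ℝ) < π := by linarith [Real.pi_gt_d6]
  have hm : (0:ℝ) ≤ (m:ℝ) := Nat.cast_nonneg m
  unfold sSeq
  have hkey : ((m:ℝ)*π+1)*16 ≤ Real.exp ((m:ℝ)*π) * (Real.exp π - 1) :=
    mul_le_mul h (by linarith) (by norm_num) (Real.exp_pos _).le
  nlinarith [mul_le_mul_of_nonneg_right hpi.le hm]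

lemma target_large (m : ℕ) : (m:ℝ)/8 ≤ (1/4) * sSeq m * Real.sin (π - Real.log 2) := by
  rw [Real.sin_pi_sub]
  have h1 := sin_log2_gt_half
  have h2 := sSeq_ge m
  have hm : (0:ℝ) ≤ (m:ℝ) := Nat.cast_nonneg m
  nlinarith [sSeq_pos m]

/-- **Both definite high-gain properties may hold simultaneously (Remark 1.4(b))**.
For every `k ≥ 1`, `χ(−s_{2k}) > (1/4)·s_{2k}·sin(π − ln 2)` and
`χ(s_{2k+1}) > (1/4)·s_{2k+1}·sin(π − ln 2)`; consequently `sup_{s>0} χ(s) = ∞` and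
`sup_{s<0} χ(s) = ∞`, i.e. the scalar function `u ↦ u·sin(ln(1+|u|))` has both the
negative-definite and positive-definite high-gain properties with `v* = 1/2`. -/
theorem both_definite_highGain :
    (∀ k : ℕ, 1 ≤ k →
      chiSin (-(sSeq (2 * k))) > (1 / 4) * sSeq (2 * k) * Real.sin (π - Real.log 2) ∧
      chiSin (sSeq (2 * k + 1)) > (1 / 4) * sSeq (2 * k + 1) * Real.sin (π - Real.log 2)) ∧
    (∀ M : ℝ, ∃ s : ℝ, 0 < s ∧ M < chiSin s) ∧
    (∀ M : ℝ, ∃ s : ℝ, s < 0 ∧ M < chiSin s) := by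

  refine ⟨fun k hk => ⟨lt_of_lt_of_le (cBound_gt _) (chi_even k hk),
      lt_of_lt_of_le (cBound_gt _) (chi_odd k)⟩, ?_, ?_⟩
  · intro M
    obtain ⟨k0, hk0⟩ := exists_nat_gt (8*M)
    refine ⟨sSeq (2*(k0+1)+1), sSeq_pos _, ?_⟩
    have h1 := lt_of_lt_of_le (cBound_gt (2*(k0+1)+1)) (chi_odd (k0+1))
    have h2 := target_large (2*(k0+1)+1)
    have hc : (8:ℝ)*M < ((2*(k0+1)+1 : ℕ) : ℝ) := by push_cast; linarith
    linarith
  · intro M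
    obtain ⟨k0, hk0⟩ := exists_nat_gt (8*M)
    refine ⟨-(sSeq (2*(k0+1))), neg_neg_iff_pos.2 (sSeq_pos _), ?_⟩
    have h1 := lt_of_lt_of_le (cBound_gt (2*(k0+1))) (chi_even (k0+1) (by omega))
    have h2 := target_large (2*(k0+1))
    have hc : (8:ℝ)*M < ((2*(k0+1) : ℕ) : ℝ) := by push_cast; linarith
    linarith
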